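/- arXiv:2506.06647 — 3 statements merged into one kernel-verified Lean document; each statement's English description precedes it below -/
import Mathlib

section
/- Under assumption (A), for every c > 0 the infimum γ(c) = inf_{u ∈ A} J(c,u) satisfies γ(c) < (1/c)[(|b-a|²/2 + M)(e^c - 1) - m e^{-c}], where a is a global minimizer of W, m = -W(a), and M = max_{x∈[0,1]} W(a + x(b-a)). -/
/-!
Test the infimum with the profile that rests at the minimiser `a`, runs along the segment from `a`
to `b` at unit speed, and then rests at `b`, shifted so that `x = 0` is the last time `t ∈ [0, 1]`
at which the segment is on `∂{W < 0}`; after that time `W ≥ 0` along the segment, so the profile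
is admissible. Its energy density is `-m e^{cx}` before the ramp, at most
`(|b - a|²/2 + M) e^{cx}` on it and `0` after it, so
`J ≤ e^{-ct} ((|b - a|²/2 + M)(e^c - 1) - m) / c`, which is strictly below the claimed bound
because `m > 0` and `b ≠ a`. The infimum is finite since every admissible density is at least
`-m e^{cx}` on `x < 0` and nonnegative on `x ≥ 0`.
-/

open Real Filter MeasureTheory Set Metric Bornology
open scoped RealInnerProductSpace NNReal

noncomputable section

abbrev Euc (n : ℕ) := EuclideanSpace ℝ (Fin n)

/-- The weighted traveling-wave energy functional `J(c,u) = ∫ e^{cx}(½|u'|² + W(u))`. -/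
def J {n : ℕ} (W : Euc n → ℝ) (c : ℝ) (u : ℝ → Euc n) : ℝ :=
  ∫ x : ℝ, Real.exp (c * x) * (‖deriv u x‖ ^ 2 / 2 + W (u x))

/-- The admissible set `A`: locally-`H¹` functions with `u(+∞) = b`, `u(0) ∈ Γ = ∂{W<0}`,
and `W(u) ≥ 0` on `[0,∞)`. -/
def Adm {n : ℕ} (W : Euc n → ℝ) (b : Euc n) : Set (ℝ → Euc n) :=
  {u | (∃ g : ℝ → Euc n, AEStronglyMeasurable g volume ∧
          LocallyIntegrable (fun t => ‖g t‖ ^ 2) volume ∧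
          ∀ x y : ℝ, u y - u x = ∫ t in x..y, g t) ∧
    Tendsto u atTop (nhds b) ∧
    u 0 ∈ frontier {v : Euc n | W v < 0} ∧
    ∀ x ≥ (0 : ℝ), 0 ≤ W (u x)}

/-- The minimum-energy function `γ(c) = inf_A J(c,·)`. -/
def gam {n : ℕ} (W : Euc n → ℝ) (b : Euc n) (c : ℝ) : ℝ :=
  sInf (J W c '' Adm W b)

open scoped Topology

theorem Continuous.exists_last_mem_frontier {X : Type*} [TopologicalSpace X] {γ : ℝ → X}
    (hγ : Continuous γ) {U : Set X} (hU : IsOpen U) (h0 : γ 0 ∈ U) (h1 : γ 1 ∉ U) :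
    ∃ t ∈ Icc (0 : ℝ) 1, γ t ∈ frontier U ∧ ∀ s ∈ Icc t 1, γ s ∉ U := by
  set S := Icc (0 : ℝ) 1 ∩ γ ⁻¹' U
  have hS0 : (0 : ℝ) ∈ S := ⟨left_mem_Icc.2 zero_le_one, h0⟩
  have hSbdd : BddAbove S := ⟨1, fun s hs => hs.1.2⟩
  set t := sSup S
  have ht : t ∈ Icc (0 : ℝ) 1 := ⟨le_csSup hSbdd hS0, csSup_le ⟨0, hS0⟩ fun s hs => hs.1.2⟩
  have hafter : ∀ s ∈ Ioc t 1, γ s ∉ U := fun s hs hsU =>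
    hs.1.not_ge (le_csSup hSbdd ⟨⟨ht.1.trans hs.1.le, hs.2⟩, hsU⟩)
  have hnot : γ t ∉ U := by
    intro htU
    have ht1 : t < 1 := ht.2.lt_of_ne fun h => h1 (h ▸ htU)
    have hnhds : γ ⁻¹' U ∈ 𝓝[>] t :=
      nhdsWithin_le_nhds (hγ.continuousAt.preimage_mem_nhds (hU.mem_nhds htU))
    obtain ⟨s, hsU, hs⟩ := Filter.nonempty_of_mem (Filter.inter_mem hnhds (Ioc_mem_nhdsGT ht1))
    exact hafter s hs hsU
  have hclosure : γ t ∈ closure U :=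
    map_mem_closure hγ (csSup_mem_closure ⟨0, hS0⟩ hSbdd) fun s hs => hs.2
  refine ⟨t, ht, hU.frontier_eq ▸ ⟨hclosure, hnot⟩, fun s hs => ?_⟩
  rcases hs.1.eq_or_lt with rfl | hlt
  · exact hnot
  · exact hafter s ⟨hlt, hs.2⟩

theorem norm_deriv_le_of_hasDerivWithinAt_Ioi {E : Type*} [NormedAddCommGroup E]
    [NormedSpace ℝ E] {f : ℝ → E} {f' : E} {x : ℝ} (h : HasDerivWithinAt f f' (Ioi x) x) :
    ‖deriv f x‖ ≤ ‖f'‖ := by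
  by_cases hf : DifferentiableAt ℝ f x
  · rw [← hf.derivWithin (uniqueDiffWithinAt_Ioi x), h.derivWithin (uniqueDiffWithinAt_Ioi x)]
  · rw [deriv_zero_of_not_differentiableAt hf, norm_zero]
    exact norm_nonneg _

section Ramp

def ramp (t x : ℝ) : ℝ := max 0 (min (x + t) 1)

variable {t x : ℝ}

theorem ramp_of_le (hx : x ≤ -t) : ramp t x = 0 :=
  max_eq_left (min_le_of_left_le (by linarith))

theorem ramp_of_ge (hx : 1 - t ≤ x) : ramp t x = 1 := by
  rw [ramp, min_eq_right (by linarith), max_eq_right zero_le_one]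

theorem ramp_of_mem_Icc (hx : x ∈ Icc (-t) (1 - t)) : ramp t x = x + t := by
  rw [ramp, min_eq_left (by linarith [hx.2]), max_eq_right (by linarith [hx.1])]

theorem ramp_mem_Icc : ramp t x ∈ Icc (0 : ℝ) 1 :=
  ⟨le_max_left _ _, max_le zero_le_one (min_le_right _ _)⟩

theorem continuous_ramp : Continuous (ramp t) := by
  unfold ramp
  fun_prop

theorem hasDerivWithinAt_ramp_Ioi :
    HasDerivWithinAt (ramp t) ((Ico (-t) (1 - t)).indicator (fun _ => 1) x) (Ioi x) x := by
  rcases lt_or_ge x (-t) with hx | hx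
  · rw [indicator_of_notMem fun h => hx.not_ge h.1]
    refine (hasDerivWithinAt_const x _ 0).congr_of_eventuallyEq ?_ (ramp_of_le hx.le)
    filter_upwards [Ioo_mem_nhdsGT hx] with y hy using ramp_of_le hy.2.le
  rcases lt_or_ge x (1 - t) with hx' | hx'
  · rw [indicator_of_mem (mem_Ico.2 ⟨hx, hx'⟩)]
    refine ((hasDerivAt_id' x).add_const t).hasDerivWithinAt.congr_of_eventuallyEq ?_
      (ramp_of_mem_Icc ⟨hx, hx'.le⟩)
    filter_upwards [Ioo_mem_nhdsGT hx'] with y hy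
      using ramp_of_mem_Icc ⟨hx.trans hy.1.le, hy.2.le⟩
  · rw [indicator_of_notMem fun h => h.2.not_ge hx']
    refine (hasDerivWithinAt_const x _ 1).congr_of_eventuallyEq ?_ (ramp_of_ge hx')
    filter_upwards [self_mem_nhdsWithin] with y hy using ramp_of_ge (hx'.trans (le_of_lt hy))

end Ramp

section RampProfile

variable {E : Type*} [NormedAddCommGroup E] [NormedSpace ℝ E] {a b : E} {t x : ℝ}

def rampProfile (a b : E) (t x : ℝ) : E := a + ramp t x • (b - a)

theorem continuous_rampProfile : Continuous (rampProfile a b t) :=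
  continuous_const.add (continuous_ramp.smul continuous_const)

theorem hasDerivWithinAt_rampProfile_Ioi :
    HasDerivWithinAt (rampProfile a b t) ((Ico (-t) (1 - t)).indicator (fun _ => b - a) x)
      (Ioi x) x := by
  refine ((hasDerivWithinAt_ramp_Ioi.smul_const (b - a)).const_add a).congr_deriv ?_
  by_cases hx : x ∈ Ico (-t) (1 - t) <;> simp [hx]

theorem norm_deriv_rampProfile_le :
    ‖deriv (rampProfile a b t) x‖ ≤ (Ico (-t) (1 - t)).indicator (fun _ => ‖b - a‖) x := by
  refine (norm_deriv_le_of_hasDerivWithinAt_Ioi hasDerivWithinAt_rampProfile_Ioi).trans_eq ?_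
  by_cases hx : x ∈ Ico (-t) (1 - t) <;> simp [hx]

theorem rampProfile_sub_eq_integral [CompleteSpace E] (x y : ℝ) :
    rampProfile a b t y - rampProfile a b t x =
      ∫ s in x..y, (Ico (-t) (1 - t)).indicator (fun _ => b - a) s := by
  refine (intervalIntegral.integral_eq_sub_of_hasDeriv_right
    continuous_rampProfile.continuousOn (fun s _ => hasDerivWithinAt_rampProfile_Ioi) ?_).symm
  exact ((integrableOn_const measure_Ico_lt_top.ne).integrable_indicator
    measurableSet_Ico).intervalIntegrable

end RampProfile

section Energy

variable {n : ℕ} {W : Euc n → ℝ} {a b : Euc n} {c t : ℝ}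

theorem rampProfile_mem_Adm (ht : t ∈ Icc (0 : ℝ) 1)
    (hfront : a + t • (b - a) ∈ frontier {v | W v < 0})
    (hpos : ∀ s ∈ Icc t 1, 0 ≤ W (a + s • (b - a))) : rampProfile a b t ∈ Adm W b := by
  set g : ℝ → Euc n := (Ico (-t) (1 - t)).indicator fun _ => b - a
  have hg : Measurable g := measurable_const.indicator measurableSet_Ico
  have hg_sq : ∀ s, ‖‖g s‖ ^ 2‖ ≤ ‖b - a‖ ^ 2 := fun s => by
    by_cases hs : s ∈ Ico (-t) (1 - t) <;> simp [g, hs]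
  refine ⟨⟨g, hg.aestronglyMeasurable, ?_, fun x y => rampProfile_sub_eq_integral x y⟩, ?_, ?_, ?_⟩
  · exact (memLp_top_of_bound (hg.norm.pow_const 2).aestronglyMeasurable _
      (Eventually.of_forall hg_sq)).locallyIntegrable le_top
  · refine tendsto_const_nhds.congr' ?_
    filter_upwards [eventually_ge_atTop (1 - t)] with x hx
    simp [rampProfile, ramp_of_ge hx]
  · rwa [rampProfile, ramp_of_mem_Icc ⟨by linarith [ht.1], by linarith [ht.2]⟩, zero_add]
  · intro x hx
    exact hpos _ ⟨le_max_of_le_right (le_min (by linarith) ht.2), ramp_mem_Icc.2⟩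

theorem exp_mul_mul_le_of_isMin (hmin : ∀ v, W a ≤ W v) (u : ℝ → Euc n) (x : ℝ) :
    W a * exp (c * x) ≤ exp (c * x) * (‖deriv u x‖ ^ 2 / 2 + W (u x)) := by
  rw [mul_comm]
  gcongr
  linarith [hmin (u x), sq_nonneg ‖deriv u x‖]

theorem div_le_J (hc : 0 < c) (hmin : ∀ v, W a ≤ W v) (ha : W a ≤ 0) {u : ℝ → Euc n}
    (hu : ∀ x ≥ 0, 0 ≤ W (u x)) : W a / c ≤ J W c u := by
  set L := (Iio (0 : ℝ)).indicator fun x => W a * exp (c * x)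
  have hL : Integrable L := IntegrableOn.integrable_indicator
    (((integrableOn_exp_mul_Iic hc 0).mono_set Iio_subset_Iic_self).const_mul _) measurableSet_Iio
  have hLu : ∀ x, L x ≤ exp (c * x) * (‖deriv u x‖ ^ 2 / 2 + W (u x)) := fun x => by
    rcases lt_or_ge x 0 with hx | hx
    · simpa [L, hx] using exp_mul_mul_le_of_isMin hmin u x
    · rw [show L x = 0 from indicator_of_notMem (notMem_Iio.2 hx) _]
      have := hu x hx
      positivity
  by_cases hint : Integrable fun x => exp (c * x) * (‖deriv u x‖ ^ 2 / 2 + W (u x))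
  · calc W a / c = ∫ x, L x := by
          rw [integral_indicator measurableSet_Iio, integral_const_mul,
            ← integral_Iic_eq_integral_Iio, integral_exp_mul_Iic hc, mul_zero, exp_zero, mul_one_div]
      _ ≤ J W c u := integral_mono hL hint hLu
  · rw [J, integral_undef hint]
    exact div_nonpos_of_nonpos_of_nonneg ha hc.le

theorem bddBelow_J_image_Adm (hc : 0 < c) (hmin : ∀ v, W a ≤ W v) (ha : W a ≤ 0) :
    BddBelow (J W c '' Adm W b) :=
  ⟨W a / c, by rintro _ ⟨u, hu, rfl⟩; exact div_le_J hc hmin ha hu.2.2.2⟩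

-- The right-hand side is `W a e^{cx}` before the ramp, `(|b - a|²/2 + M) e^{cx}` on it, `0` after.
theorem integrand_rampProfile_le {M : ℝ} (hWb : W b = 0)
    (hM : ∀ s ∈ Icc (0 : ℝ) 1, W (a + s • (b - a)) ≤ M) (x : ℝ) :
    exp (c * x) * (‖deriv (rampProfile a b t) x‖ ^ 2 / 2 + W (rampProfile a b t x)) ≤
      (Iic (1 - t)).indicator (fun x => (‖b - a‖ ^ 2 / 2 + M) * exp (c * x)) x
        - (Iio (-t)).indicator (fun x => (‖b - a‖ ^ 2 / 2 + M - W a) * exp (c * x)) x := by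
  have hd : ‖deriv (rampProfile a b t) x‖ ≤ _ := norm_deriv_rampProfile_le
  rcases lt_or_ge x (-t) with hx | hx
  · rw [indicator_of_notMem fun h => hx.not_ge h.1, norm_le_zero_iff] at hd
    rw [indicator_of_mem (mem_Iic.2 (by linarith)), indicator_of_mem (mem_Iio.2 hx), hd,
      rampProfile, ramp_of_le hx.le]
    simp only [norm_zero, zero_smul, add_zero]
    linarith
  rcases le_or_gt x (1 - t) with hx' | hx'
  · rw [indicator_of_mem (mem_Iic.2 hx'), indicator_of_notMem (notMem_Iio.2 hx), sub_zero,
      mul_comm _ (exp _)]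
    have hd' : ‖deriv (rampProfile a b t) x‖ ≤ ‖b - a‖ :=
      hd.trans (indicator_le_self' (fun _ _ => norm_nonneg _) x)
    gcongr
    exact hM _ ramp_mem_Icc
  · rw [indicator_of_notMem fun h => hx'.not_ge h.2.le, norm_le_zero_iff] at hd
    rw [indicator_of_notMem (notMem_Iic.2 hx'), indicator_of_notMem (notMem_Iio.2 hx), hd,
      rampProfile, ramp_of_ge hx'.le]
    simp [hWb]

theorem J_rampProfile_le {M : ℝ} (hc : 0 < c) (hW : Continuous W) (hmin : ∀ v, W a ≤ W v)
    (hWb : W b = 0) (hM : ∀ s ∈ Icc (0 : ℝ) 1, W (a + s • (b - a)) ≤ M) :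
    J W c (rampProfile a b t) ≤
      exp (-(c * t)) * ((‖b - a‖ ^ 2 / 2 + M) * (exp c - 1) + W a) / c := by
  set K := ‖b - a‖ ^ 2 / 2 + M
  set u := rampProfile a b t
  set f := fun x => exp (c * x) * (‖deriv u x‖ ^ 2 / 2 + W (u x))
  set F := fun x => (Iic (1 - t)).indicator (fun x => K * exp (c * x)) x
    - (Iio (-t)).indicator (fun x => (K - W a) * exp (c * x)) x
  set L := (Iic (1 - t)).indicator fun x => W a * exp (c * x)
  have hF₁ : Integrable ((Iic (1 - t)).indicator fun x => K * exp (c * x)) :=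
    IntegrableOn.integrable_indicator ((integrableOn_exp_mul_Iic hc _).const_mul K)
      measurableSet_Iic
  have hF₂ : Integrable ((Iio (-t)).indicator fun x => (K - W a) * exp (c * x)) :=
    IntegrableOn.integrable_indicator
      (((integrableOn_exp_mul_Iic hc _).mono_set Iio_subset_Iic_self).const_mul _)
      measurableSet_Iio
  have hL : Integrable L :=
    IntegrableOn.integrable_indicator ((integrableOn_exp_mul_Iic hc _).const_mul _)
      measurableSet_Iic
  have hfF : ∀ x, f x ≤ F x := integrand_rampProfile_le hWb hM
  have hLf : ∀ x, L x ≤ f x := fun x => by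
    rcases le_or_gt x (1 - t) with hx | hx
    · rw [show L x = _ from indicator_of_mem (mem_Iic.2 hx) _]
      exact exp_mul_mul_le_of_isMin hmin u x
    · rw [show L x = 0 from indicator_of_notMem (notMem_Iic.2 hx) _]
      simp only [f, u, rampProfile, ramp_of_ge hx.le, one_smul, add_sub_cancel, hWb]
      positivity
  have hf_meas : AEStronglyMeasurable f :=
    (by fun_prop : Continuous fun x => exp (c * x)).aestronglyMeasurable.mul
      ((((measurable_deriv u).norm.pow_const 2).div_const 2).aestronglyMeasurable.add
        (hW.comp continuous_rampProfile).aestronglyMeasurable)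
  have hf : Integrable f :=
    integrable_of_le_of_le hf_meas (ae_of_all _ hLf) (ae_of_all _ hfF) hL (hF₁.sub hF₂)
  calc J W c u ≤ ∫ x, F x := integral_mono hf (hF₁.sub hF₂) hfF
    _ = _ := by
      rw [integral_sub hF₁ hF₂, integral_indicator measurableSet_Iic,
        integral_indicator measurableSet_Iio, integral_const_mul, integral_const_mul,
        ← integral_Iic_eq_integral_Iio, integral_exp_mul_Iic hc, integral_exp_mul_Iic hc,
        show c * (1 - t) = c + -(c * t) by ring, exp_add, show c * -t = -(c * t) by ring]
      ring

end Energy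

theorem exp_neg_mul_mul_sub_lt {c K m t : ℝ} (hc : 0 < c) (hK : 0 < K) (hm : 0 < m)
    (ht : t ∈ Icc (0 : ℝ) 1) :
    exp (-(c * t)) * (K * (exp c - 1) - m) < K * (exp c - 1) - m * exp (-c) := by
  have hKe : 0 < K * (exp c - 1) := mul_pos hK (by linarith [add_one_lt_exp hc.ne'])
  have hs : exp (-c) ≤ exp (-(c * t)) := exp_le_exp.2 (by nlinarith [ht.2])
  rcases ht.1.eq_or_lt with rfl | ht₀
  · rw [mul_zero, neg_zero, exp_zero, one_mul]
    nlinarith [exp_lt_one_iff.2 (neg_lt_zero.2 hc)]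
  · nlinarith [exp_lt_one_iff.2 (neg_lt_zero.2 (mul_pos hc ht₀))]

theorem stmt_2_general {n : ℕ} (W : Euc n → ℝ) (b a : Euc n) (c m M : ℝ) (hc : 0 < c)
    (hW : ContDiff ℝ 2 W) (hWb : W b = 0)
    (hDne : {v : Euc n | W v < 0}.Nonempty)
    (ha : IsLeast (Set.range W) (W a)) (ham : m = -W a)
    (hM : IsGreatest ((fun t : ℝ => W (a + t • (b - a))) '' Set.Icc 0 1) M) :
    gam W b c < (1 / c) * ((‖b - a‖ ^ 2 / 2 + M) * (Real.exp c - 1) - m * Real.exp (-c)) := by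
  have hmin : ∀ v, W a ≤ W v := fun v => ha.2 (mem_range_self v)
  obtain ⟨v₀, hv₀⟩ := hDne
  have hWa : W a < 0 := (hmin v₀).trans_lt hv₀
  have hMle : ∀ s ∈ Icc (0 : ℝ) 1, W (a + s • (b - a)) ≤ M := fun s hs => hM.2 ⟨s, hs, rfl⟩
  have hM₀ : 0 ≤ M := by simpa [hWb] using hMle 1 ⟨zero_le_one, le_rfl⟩
  have hba : 0 < ‖b - a‖ := norm_pos_iff.2 (sub_ne_zero.2 fun h => hWa.ne (h ▸ hWb))
  obtain ⟨t, ht, hfront, hpos⟩ := (continuous_const.add (continuous_id.smul continuous_const)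
    : Continuous fun s : ℝ => a + s • (b - a)).exists_last_mem_frontier
    (isOpen_lt hW.continuous continuous_const) (by simpa using hWa) (by simp [hWb])
  calc gam W b c ≤ J W c (rampProfile a b t) :=
        csInf_le (bddBelow_J_image_Adm hc hmin hWa.le)
          ⟨_, rampProfile_mem_Adm ht hfront fun s hs => not_lt.1 (hpos s hs), rfl⟩
    _ ≤ exp (-(c * t)) * ((‖b - a‖ ^ 2 / 2 + M) * (exp c - 1) - m) / c := by
        simpa [ham, sub_eq_add_neg] using J_rampProfile_le hc hW.continuous hmin hWb hMle
    _ < _ := by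
        rw [one_div_mul_eq_div]
        exact div_lt_div_of_pos_right
          (exp_neg_mul_mul_sub_lt hc (by positivity) (by linarith) ht) hc

theorem stmt_2 {n : ℕ} (W : Euc n → ℝ) (b a : Euc n) (c m M : ℝ) (hc : 0 < c)
    (hW : ContDiff ℝ 2 W) (hWb : W b = 0) (hgb : gradient W b = 0)
    (hHess : ∃ μ > 0, ∀ v : Euc n, μ * ‖v‖ ^ 2 ≤ ⟪(fderiv ℝ (gradient W) b) v, v⟫)
    (hDne : {v : Euc n | W v < 0}.Nonempty)
    (hDbd : IsBounded {v : Euc n | W v < 0})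
    (ha : IsLeast (Set.range W) (W a)) (ham : m = -W a)
    (hM : IsGreatest ((fun t : ℝ => W (a + t • (b - a))) '' Set.Icc 0 1) M) :
    gam W b c < (1 / c) * ((‖b - a‖ ^ 2 / 2 + M) * (Real.exp c - 1) - m * Real.exp (-c)) :=
  stmt_2_general W b a c m M hc hW hWb hDne ha ham hM
end
end

section
/- Let c > 0, m > 0, d > 0, M ≥ 0, and K = |b-a|²/2 + M. If γ : (0,∞) → ℝ satisfies c d²/2 - m/c ≤ γ(c) ≤ (1/c)(K(e^c - 1) - m e^{-c}) for all c > 0, then any root c* of γ(c*) = 0 satisfies ln((1 + √(1 + 8m/(2K)))/2) < c* ≤ √(2m)/d. -/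
open Real Filter MeasureTheory Set Metric Bornology
open scoped RealInnerProductSpace NNReal

noncomputable section

/-!
At a root `c` of `γ`, the lower bound gives `c² d² ≤ 2m`, while the upper bound gives
`m e^{-c} < K (e^c - 1)`, i.e. `m < K s (s - 1)` for `s = e^c`. Since `s ↦ s (s - 1)` is increasing
for `s ≥ 1/2`, `s` then exceeds the positive root `(1 + √(1 + 4m/K)) / 2` of `K s (s - 1) = m`.
-/

lemma le_sqrt_div_of_mul_sq_div_two_sub_div_nonpos {c d m : ℝ} (hc : 0 < c) (hd : 0 < d)
    (h : c * d ^ 2 / 2 - m / c ≤ 0) : c ≤ √(2 * m) / d := by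
  have hsq : (c * d) ^ 2 ≤ 2 * m := by
    have hmul : c * (c * d ^ 2 / 2 - m / c) ≤ 0 := mul_nonpos_of_nonneg_of_nonpos hc.le h
    have hcm : c * (m / c) = m := mul_div_cancel₀ m hc.ne'
    nlinarith
  rw [le_div_iff₀ hd]
  exact le_sqrt_of_sq_le hsq

lemma lt_mul_exp_mul_exp_sub_one {c K m : ℝ} (hc : 0 < c)
    (h : 0 < 1 / c * (K * (exp c - 1) - m * exp (-c))) :
    m < K * (exp c * (exp c - 1)) := by
  have hdiff : m * exp (-c) < K * (exp c - 1) := by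
    have := (pos_iff_pos_of_mul_pos h).mp (by positivity)
    linarith
  calc m = m * exp (-c) * exp c := by rw [mul_assoc, ← exp_add, neg_add_cancel, exp_zero, mul_one]
    _ < K * (exp c - 1) * exp c := mul_lt_mul_of_pos_right hdiff (exp_pos c)
    _ = K * (exp c * (exp c - 1)) := by ring

lemma one_add_sqrt_div_two_lt {K m s : ℝ} (hK : 0 < K) (hs : 1 / 2 < s)
    (h : m < K * (s * (s - 1))) : (1 + √(1 + 4 * m / K)) / 2 < s := by
  have hmK : 4 * m / K < 4 * (s * (s - 1)) := by
    rw [div_lt_iff₀ hK]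
    linarith
  have hsqrt : √(1 + 4 * m / K) < 2 * s - 1 := by
    rw [sqrt_lt' (by linarith)]
    linarith
  linarith

theorem stmt_3_general (m d K : ℝ) (γ : ℝ → ℝ)
    (hm : 0 < m) (hd : 0 < d)
    (hbound : ∀ c : ℝ, 0 < c →
      c * d ^ 2 / 2 - m / c ≤ γ c ∧
      γ c < (1 / c) * (K * (Real.exp c - 1) - m * Real.exp (-c)))
    (cstar : ℝ) (hcs : 0 < cstar) (hroot : γ cstar = 0) :
    Real.log ((1 + Real.sqrt (1 + 8 * m / (2 * K))) / 2) < cstar ∧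
      cstar ≤ Real.sqrt (2 * m) / d := by
  obtain ⟨hlower, hupper⟩ := hbound cstar hcs
  rw [hroot] at hlower hupper
  have hgap := lt_mul_exp_mul_exp_sub_one hcs hupper
  have hK : 0 < K :=
    (pos_iff_pos_of_mul_pos (hm.trans hgap)).mpr
      (mul_pos (exp_pos _) (sub_pos.mpr (one_lt_exp_iff.mpr hcs)))
  have hexp : 1 / 2 < exp cstar := by linarith [one_lt_exp_iff.mpr hcs]
  refine ⟨?_, le_sqrt_div_of_mul_sq_div_two_sub_div_nonpos hcs hd hlower⟩
  rw [show 8 * m / (2 * K) = 4 * m / K by ring, ← log_exp cstar]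
  exact log_lt_log (by positivity) (one_add_sqrt_div_two_lt hK hexp hgap)

theorem stmt_3 {n : ℕ} (a b : Euc n) (m d M K : ℝ) (γ : ℝ → ℝ)
    (hm : 0 < m) (hd : 0 < d) (hM : 0 ≤ M) (hK : K = ‖b - a‖ ^ 2 / 2 + M)
    (hbound : ∀ c : ℝ, 0 < c →
      c * d ^ 2 / 2 - m / c ≤ γ c ∧
      γ c < (1 / c) * (K * (Real.exp c - 1) - m * Real.exp (-c)))
    (cstar : ℝ) (hcs : 0 < cstar) (hroot : γ cstar = 0) :
    Real.log ((1 + Real.sqrt (1 + 8 * m / (2 * K))) / 2) < cstar ∧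
      cstar ≤ Real.sqrt (2 * m) / d :=
  stmt_3_general m d K γ hm hd hbound cstar hcs hroot
end
end

section
/- Let u be a C² solution of c u' + u'' = DW(u) on (0,∞) with ½|u'(x)|² - W(u(x)) and |u'(x)|² decaying like O(e^{-2λx}) for some λ > c. Then integrating the identity ((½|u'|²-W(u))e^{ax})' + ((2c-a)/2 |u'|² + aW(u))e^{ax} = 0 over (0,∞) for a ∈ (0,2c) yields ∫₀^∞ ((2c-a)/(2a)|u'|² + W(u)) e^{ax} dx = |u'(0+)|²/(2a). In particular, taking a = c: ∫₀^∞ (½|u'|² + W(u)) e^{cx} dx = |u'(0+)|²/(2c). -/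
open Real Filter MeasureTheory Set Metric Bornology
open scoped RealInnerProductSpace NNReal

noncomputable section

open scoped Topology

/-!
Along a solution of `c u' + u'' = ∇W(u)` the energy `|u'|²/2 - W(u)` has derivative `-c|u'|²`,
so `(|u'|²/2 - W(u)) e^{ax}` has derivative `-((2c-a)/2 |u'|² + a W(u)) e^{ax}`. For `a < 2λ` the
`e^{-2λx}` decay makes this derivative integrable on `(0,∞)` and the weighted energy vanish at
`+∞`, so the integral equals the weighted energy at `0`, which is `|u'(0)|²/2` since `W(u(0)) = 0`.
Dividing by `a` gives the identity, and `a = c` the special case.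
-/

theorem abs_mul_add_mul_le {α β p q K : ℝ} (hp : |p| ≤ K) (hq : |q| ≤ K) :
    |α * p + β * q| ≤ (|α| + |β|) * K :=
  calc |α * p + β * q| ≤ |α| * |p| + |β| * |q| := by
        simpa only [abs_mul] using abs_add_le (α * p) (β * q)
    _ ≤ (|α| + |β|) * K := by rw [add_mul]; gcongr

section ExpDecay

variable {f : ℝ → ℝ} {a b C : ℝ}

theorem abs_mul_exp_le_of_abs_le {y x : ℝ} (h : |y| ≤ C * Real.exp (-b * x)) :
    |y * Real.exp (a * x)| ≤ C * Real.exp (-(b - a) * x) := by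
  rw [abs_mul, abs_of_pos (Real.exp_pos _)]
  calc |y| * Real.exp (a * x) ≤ C * Real.exp (-b * x) * Real.exp (a * x) := by gcongr
    _ = C * Real.exp (-(b - a) * x) := by rw [mul_assoc, ← Real.exp_add]; congr 2; ring

theorem integrableOn_Ioi_mul_exp_of_abs_le {t : ℝ}
    (hf : AEStronglyMeasurable f (volume.restrict (Ioi t))) (hab : a < b)
    (hbound : ∀ x ∈ Ioi t, |f x| ≤ C * Real.exp (-b * x)) :
    IntegrableOn (fun x => f x * Real.exp (a * x)) (Ioi t) := by
  refine Integrable.mono' ((exp_neg_integrableOn_Ioi t (sub_pos.2 hab)).const_mul C)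
    (hf.mul (by fun_prop : Continuous fun x => Real.exp (a * x)).aestronglyMeasurable) ?_
  filter_upwards [self_mem_ae_restrict measurableSet_Ioi] with x hx
  exact abs_mul_exp_le_of_abs_le (hbound x hx)

theorem tendsto_mul_exp_atTop_of_abs_le (hab : a < b)
    (hbound : ∀ᶠ x in atTop, |f x| ≤ C * Real.exp (-b * x)) :
    Tendsto (fun x => f x * Real.exp (a * x)) atTop (𝓝 0) := by
  refine squeeze_zero_norm' (hbound.mono fun x hx => abs_mul_exp_le_of_abs_le hx) ?_
  have : Tendsto (fun x : ℝ => -(b - a) * x) atTop atBot :=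
    tendsto_id.const_mul_atTop_of_neg (by linarith)
  simpa using (Real.tendsto_exp_atBot.comp this).const_mul C

end ExpDecay

section Pohozaev

variable {E : Type*} [NormedAddCommGroup E] [InnerProductSpace ℝ E] [CompleteSpace E]
  {W : E → ℝ} {u u' u'' : ℝ → E} {c a : ℝ}

theorem hasDerivAt_energy {x : ℝ} (hW : DifferentiableAt ℝ W (u x)) (hu : HasDerivAt u (u' x) x)
    (hu' : HasDerivAt u' (u'' x) x) (hODE : c • u' x + u'' x = gradient W (u x)) :
    HasDerivAt (fun t => ‖u' t‖ ^ 2 / 2 - W (u t)) (-(c * ‖u' x‖ ^ 2)) x := by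
  have hWu : HasDerivAt (fun t => W (u t)) ⟪gradient W (u x), u' x⟫ x := by
    have h := (hasGradientAt_iff_hasFDerivAt.mp hW.hasGradientAt).comp_hasDerivAt x hu
    rwa [InnerProductSpace.toDual_apply_apply] at h
  refine ((hu'.norm_sq.div_const 2).sub hWu).congr_deriv ?_
  rw [← hODE, inner_add_left, real_inner_smul_left, real_inner_self_eq_norm_sq, real_inner_comm]
  ring

theorem hasDerivAt_energy_mul_exp {x : ℝ} (hW : DifferentiableAt ℝ W (u x))
    (hu : HasDerivAt u (u' x) x) (hu' : HasDerivAt u' (u'' x) x)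
    (hODE : c • u' x + u'' x = gradient W (u x)) :
    HasDerivAt (fun t => (‖u' t‖ ^ 2 / 2 - W (u t)) * Real.exp (a * t))
      (-(((2 * c - a) / 2 * ‖u' x‖ ^ 2 + a * W (u x)) * Real.exp (a * x))) x := by
  have hexp : HasDerivAt (fun t => Real.exp (a * t)) (Real.exp (a * x) * a) x := by
    simpa using ((hasDerivAt_id x).const_mul a).exp
  refine ((hasDerivAt_energy hW hu hu' hODE).mul hexp).congr_deriv ?_
  ring

theorem integral_Ioi_pohozaev {b C : ℝ} (hW : Differentiable ℝ W)
    (hu : ∀ x, HasDerivAt u (u' x) x) (hcont : Continuous u')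
    (hu' : ∀ x ∈ Ioi (0 : ℝ), HasDerivAt u' (u'' x) x)
    (hODE : ∀ x ∈ Ioi (0 : ℝ), c • u' x + u'' x = gradient W (u x)) (hab : a < b)
    (hu'_decay : ∀ x ∈ Ioi (0 : ℝ), ‖u' x‖ ^ 2 ≤ C * Real.exp (-b * x))
    (hW_decay : ∀ x ∈ Ioi (0 : ℝ), |W (u x)| ≤ C * Real.exp (-b * x)) :
    ∫ x in Ioi 0, ((2 * c - a) / 2 * ‖u' x‖ ^ 2 + a * W (u x)) * Real.exp (a * x)
      = ‖u' 0‖ ^ 2 / 2 - W (u 0) := by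
  have hWu : Continuous fun t => W (u t) :=
    hW.continuous.comp (continuous_iff_continuousAt.2 fun x => (hu x).continuousAt)
  have hnorm : Continuous fun t => ‖u' t‖ ^ 2 := hcont.norm.pow 2
  have hbound : ∀ α β : ℝ, ∀ x ∈ Ioi (0 : ℝ),
      |α * ‖u' x‖ ^ 2 + β * W (u x)| ≤ (|α| + |β|) * C * Real.exp (-b * x) := fun α β x hx => by
    rw [mul_assoc]
    refine abs_mul_add_mul_le ?_ (hW_decay x hx)
    rw [abs_of_nonneg (by positivity)]
    exact hu'_decay x hx
  have hint := integrableOn_Ioi_mul_exp_of_abs_le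
    ((continuous_const.mul hnorm).add (continuous_const.mul hWu)).aestronglyMeasurable hab
    (hbound ((2 * c - a) / 2) a)
  have hlim : Tendsto (fun t => (‖u' t‖ ^ 2 / 2 - W (u t)) * Real.exp (a * t)) atTop (𝓝 0) := by
    refine tendsto_mul_exp_atTop_of_abs_le hab (C := (|1 / 2| + |-1|) * C) ?_
    filter_upwards [eventually_gt_atTop 0] with x hx
    convert hbound (1 / 2) (-1) x hx using 2
    ring
  have hcont0 : ContinuousWithinAt
      (fun t => (‖u' t‖ ^ 2 / 2 - W (u t)) * Real.exp (a * t)) (Ici 0) 0 :=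
    (((hnorm.div_const 2).sub hWu).mul (by fun_prop)).continuousWithinAt
  have hFTC := integral_Ioi_of_hasDerivAt_of_tendsto hcont0
    (fun x hx => hasDerivAt_energy_mul_exp (hW _) (hu x) (hu' x hx) (hODE x hx)) hint.neg hlim
  rw [integral_neg, mul_zero, Real.exp_zero, mul_one] at hFTC
  linarith

end Pohozaev

theorem stmt_14 {n : ℕ} (W : Euc n → ℝ) (hW : ContDiff ℝ 1 W) (c : ℝ) (hc : 0 < c)
    (u u' u'' : ℝ → Euc n)
    (hu : ∀ x, HasDerivAt u (u' x) x) (hcont : Continuous u')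
    (hu' : ∀ x ∈ Set.Ioi (0 : ℝ), HasDerivAt u' (u'' x) x)
    (hODE : ∀ x ∈ Set.Ioi (0 : ℝ), c • u' x + u'' x = gradient W (u x))
    (hW0 : W (u 0) = 0)
    (hdecay : ∃ lam > c, ∃ C : ℝ, ∀ x ≥ (0 : ℝ),
      ‖u' x‖ ^ 2 + |W (u x)| + |‖u' x‖ ^ 2 / 2 - W (u x)| ≤ C * Real.exp (-2 * lam * x)) :
    (∀ a : ℝ, 0 < a → a < 2 * c →
      ∫ x in Set.Ioi (0 : ℝ),
        ((2 * c - a) / (2 * a) * ‖u' x‖ ^ 2 + W (u x)) * Real.exp (a * x)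
        = ‖u' 0‖ ^ 2 / (2 * a)) ∧
    ∫ x in Set.Ioi (0 : ℝ), (‖u' x‖ ^ 2 / 2 + W (u x)) * Real.exp (c * x)
      = ‖u' 0‖ ^ 2 / (2 * c) := by
  obtain ⟨lam, hlam, C, hC⟩ := hdecay
  simp only [neg_mul (2 : ℝ) lam] at hC
  have hu'_decay : ∀ x ∈ Ioi (0 : ℝ), ‖u' x‖ ^ 2 ≤ C * Real.exp (-(2 * lam) * x) := fun x hx => by
    linarith [hC x (le_of_lt hx), abs_nonneg (W (u x)), abs_nonneg (‖u' x‖ ^ 2 / 2 - W (u x))]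
  have hW_decay : ∀ x ∈ Ioi (0 : ℝ), |W (u x)| ≤ C * Real.exp (-(2 * lam) * x) := fun x hx => by
    linarith [hC x (le_of_lt hx), sq_nonneg ‖u' x‖, abs_nonneg (‖u' x‖ ^ 2 / 2 - W (u x))]
  have weighted : ∀ a : ℝ, 0 < a → a < 2 * c →
      ∫ x in Ioi (0 : ℝ), ((2 * c - a) / (2 * a) * ‖u' x‖ ^ 2 + W (u x)) * Real.exp (a * x)
        = ‖u' 0‖ ^ 2 / (2 * a) := by
    intro a ha hac
    have hpoh := integral_Ioi_pohozaev (hW.differentiable one_ne_zero) hu hcont hu' hODE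
      (by linarith) hu'_decay hW_decay
    rw [hW0, sub_zero] at hpoh
    calc _ = a⁻¹ * ∫ x in Ioi (0 : ℝ),
          ((2 * c - a) / 2 * ‖u' x‖ ^ 2 + a * W (u x)) * Real.exp (a * x) := by
          rw [← integral_const_mul]; congr 1 with x; field_simp
      _ = _ := by rw [hpoh]; field_simp
  refine ⟨weighted, ?_⟩
  rw [← weighted c hc (by linarith)]
  congr 1 with x
  field_simp
  ring
end
end
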